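/- Let H be a complex Hilbert space and T a self-adjoint operator bounded below. Suppose φ₀, …, φ_N ∈ Dom(T) satisfy ⟨φ_i, φ_j⟩ = δ_{ij} and ‖Tφ_j - μ_j φ_j‖ ≤ ε for real numbers μ₀ ≤ … ≤ μ_N and ε ≥ 0, and suppose Spec(T) ∩ (-∞, μ_N + ε] consists of finitely many eigenvalues with finite multiplicities λ₀ ≤ λ₁ ≤ …. If moreover the μ_j are separated: μ_{j+1} - μ_j > 2ε for all j, then λ_j ≤ μ_j + ε for each 0 ≤ j ≤ N. -/

import Mathlib

open Complex

/-!
Each quasimode `φ i` forces a point of the spectrum of `T` within `ε` of `μ i`, because for a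
normal operator `‖(T - μ)⁻¹‖` is the inverse of the distance from `μ` to the spectrum; below
`μ N + ε` that point is an eigenvalue `lam i`. The separation `2 * ε` makes the `lam i` strictly
increasing, so their eigenvectors are orthonormal, and the eigenvectors of `lam 0, …, lam j` span
a `(j + 1)`-dimensional test space on which the Rayleigh quotient is at most `μ j + ε`.
-/

section MinMax

variable {H : Type*} [NormedAddCommGroup H] [InnerProductSpace ℂ H]

noncomputable def minmaxValue (T : H →L[ℂ] H) (j : ℕ) : ℝ :=
  sInf {m : ℝ | ∃ V : Submodule ℂ H, Module.finrank ℂ V = j + 1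
    ∧ ∀ u ∈ V, (inner ℂ (T u) u : ℂ).re ≤ m * ‖u‖ ^ 2}

theorem bddBelow_minmaxValue_set (T : H →L[ℂ] H) (j : ℕ) :
    BddBelow {m : ℝ | ∃ V : Submodule ℂ H, Module.finrank ℂ V = j + 1
      ∧ ∀ u ∈ V, (inner ℂ (T u) u : ℂ).re ≤ m * ‖u‖ ^ 2} := by
  refine ⟨-‖T‖, ?_⟩
  rintro m ⟨V, hV, hm⟩
  have hVne : V ≠ ⊥ := by rintro rfl; simp at hV
  obtain ⟨x, hx, hx0⟩ := Submodule.exists_mem_ne_zero_of_ne_bot hVne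
  have hTx : |(inner ℂ (T x) x : ℂ).re| ≤ ‖T‖ * ‖x‖ ^ 2 :=
    calc |(inner ℂ (T x) x : ℂ).re| ≤ ‖T x‖ * ‖x‖ :=
          (abs_re_le_norm _).trans (norm_inner_le_norm _ _)
      _ ≤ ‖T‖ * ‖x‖ * ‖x‖ := by gcongr; exact T.le_opNorm x
      _ = ‖T‖ * ‖x‖ ^ 2 := by ring
  have hlow : -‖T‖ * ‖x‖ ^ 2 ≤ (inner ℂ (T x) x : ℂ).re := by linarith [(abs_le.mp hTx).1]
  exact le_of_mul_le_mul_right (hlow.trans (hm x hx)) (by positivity)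

theorem minmaxValue_le {T : H →L[ℂ] H} {j : ℕ} {V : Submodule ℂ H}
    (hV : Module.finrank ℂ V = j + 1) {m : ℝ}
    (hm : ∀ u ∈ V, (inner ℂ (T u) u : ℂ).re ≤ m * ‖u‖ ^ 2) : minmaxValue T j ≤ m :=
  csInf_le (bddBelow_minmaxValue_set T j) ⟨V, hV, hm⟩

theorem re_inner_apply_le_of_mem_span_eigenvectors {T : H →L[ℂ] H} {ι : Type*} [Fintype ι]
    {v : ι → H} (hv : Orthonormal ℂ v) {lam : ι → ℝ} (hTv : ∀ i, T (v i) = (lam i : ℂ) • v i)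
    {m : ℝ} (hlam : ∀ i, lam i ≤ m) {u : H} (hu : u ∈ Submodule.span ℂ (Set.range v)) :
    (inner ℂ (T u) u : ℂ).re ≤ m * ‖u‖ ^ 2 := by
  obtain ⟨c, rfl⟩ := (Submodule.mem_span_range_iff_exists_fun ℂ).mp hu
  have hTu : T (∑ i, c i • v i) = ∑ i, ((lam i : ℂ) * c i) • v i := by
    simp only [map_sum, map_smul, hTv, smul_smul, mul_comm]
  rw [hTu, ← inner_self_eq_norm_sq (𝕜 := ℂ), hv.inner_sum, hv.inner_sum, re_sum,
    RCLike.re_to_complex, re_sum, Finset.mul_sum]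
  refine Finset.sum_le_sum fun i _ => ?_
  have hc : (starRingEnd ℂ) (c i) * c i = ((‖c i‖ ^ 2 : ℝ) : ℂ) := by
    rw [conj_mul']; push_cast; rfl
  rw [map_mul, conj_ofReal, mul_assoc, hc, ← ofReal_mul, ofReal_re, ofReal_re]
  exact mul_le_mul_of_nonneg_right (hlam i) (by positivity)

theorem minmaxValue_le_of_orthonormal_eigenvectors {T : H →L[ℂ] H} {j : ℕ}
    {v : Fin (j + 1) → H} (hv : Orthonormal ℂ v) {lam : Fin (j + 1) → ℝ}
    (hTv : ∀ i, T (v i) = (lam i : ℂ) • v i) {m : ℝ} (hlam : ∀ i, lam i ≤ m) :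
    minmaxValue T j ≤ m :=
  minmaxValue_le (by simp [finrank_span_eq_card hv.linearIndependent])
    fun _ => re_inner_apply_le_of_mem_span_eigenvectors hv hTv hlam

end MinMax

section Spectrum

variable {H : Type*} [NormedAddCommGroup H] [InnerProductSpace ℂ H] [CompleteSpace H]

theorem mul_norm_le_norm_apply_sub_smul {T : H →L[ℂ] H} [IsStarNormal T] {μ : ℂ} {r : ℝ}
    (hr : 0 < r) (hgap : ∀ z ∈ spectrum ℂ T, r ≤ ‖z - μ‖) (x : H) :
    r * ‖x‖ ≤ ‖T x - μ • x‖ := by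
  have hne : ∀ z ∈ spectrum ℂ T, z - μ ≠ 0 := fun z hz h0 =>
    (hgap z hz).not_gt (by simpa [h0] using hr)
  have hcont : ContinuousOn (fun z => (z - μ)⁻¹) (spectrum ℂ T) :=
    (continuousOn_id.sub continuousOn_const).inv₀ hne
  set R := cfc (fun z => (z - μ)⁻¹) T
  have hR : ‖R‖ ≤ r⁻¹ := norm_cfc_le (inv_nonneg.mpr hr.le) fun z hz => by
    rw [norm_inv]; exact inv_anti₀ hr (hgap z hz)
  have hinv : R * (T - algebraMap ℂ _ μ) = 1 :=
    calc R * (T - algebraMap ℂ _ μ) = R * cfc (fun z => z - μ) T := by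
          rw [cfc_sub (fun z : ℂ => z) (fun _ => μ) T, cfc_id' ℂ T, cfc_const μ T]
      _ = cfc (fun z => (z - μ)⁻¹ * (z - μ)) T := (cfc_mul _ _ T hcont).symm
      _ = cfc (fun _ => (1 : ℂ)) T := cfc_congr fun z hz => inv_mul_cancel₀ (hne z hz)
      _ = 1 := cfc_const_one ℂ T
  have hx : x = R (T x - μ • x) := by
    simpa [Algebra.algebraMap_eq_smul_one] using congr($hinv.symm x)
  calc r * ‖x‖ ≤ r * (r⁻¹ * ‖T x - μ • x‖) := by
        gcongr
        conv_lhs => rw [hx]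
        exact R.le_of_opNorm_le hR _
    _ = ‖T x - μ • x‖ := by field_simp

theorem exists_mem_spectrum_norm_sub_le {T : H →L[ℂ] H} [IsStarNormal T] {φ : H}
    (hφ : ‖φ‖ = 1) (μ : ℂ) : ∃ z ∈ spectrum ℂ T, ‖z - μ‖ ≤ ‖T φ - μ • φ‖ := by
  by_contra! hfar
  obtain ⟨r, hr, hgap⟩ := (spectrum.isCompact T).exists_forall_le'
    (continuous_id.sub continuous_const).norm.continuousOn hfar
  have := mul_norm_le_norm_apply_sub_smul ((norm_nonneg _).trans_lt hr) hgap φ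
  rw [hφ, mul_one] at this
  exact this.not_gt hr

theorem IsSelfAdjoint.exists_mem_spectrum_abs_sub_le {T : H →L[ℂ] H} (hT : IsSelfAdjoint T)
    {φ : H} (hφ : ‖φ‖ = 1) (μ : ℝ) :
    ∃ x : ℝ, (x : ℂ) ∈ spectrum ℂ T ∧ |x - μ| ≤ ‖T φ - (μ : ℂ) • φ‖ := by
  have : IsStarNormal T := hT.isStarNormal
  obtain ⟨z, hz, hzμ⟩ := exists_mem_spectrum_norm_sub_le (T := T) hφ (μ : ℂ)
  refine ⟨z.re, hT.mem_spectrum_eq_re hz ▸ hz, le_trans ?_ hzμ⟩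
  simpa using abs_re_le_norm (z - μ)

theorem IsSelfAdjoint.exists_orthonormal_eigenvectors {T : H →L[ℂ] H} (hT : IsSelfAdjoint T)
    {ι : Type*} {lam : ι → ℝ} (hlam : Function.Injective lam)
    (heig : ∀ i, Module.End.HasEigenvalue (T : H →ₗ[ℂ] H) (lam i)) :
    ∃ v : ι → H, Orthonormal ℂ v ∧ ∀ i, T (v i) = (lam i : ℂ) • v i := by
  have hunit : ∀ i, ∃ x ∈ Module.End.eigenspace (T : H →ₗ[ℂ] H) (lam i), ‖x‖ = 1 := by
    intro i
    obtain ⟨x, hx, hx0⟩ := (heig i).exists_hasEigenvector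
    exact ⟨(‖x‖⁻¹ : ℂ) • x, Submodule.smul_mem _ _ hx, norm_smul_inv_norm hx0⟩
  choose v hv hv1 using hunit
  refine ⟨v, ⟨hv1, fun i j hij => ?_⟩, fun i => Module.End.mem_eigenspace_iff.mp (hv i)⟩
  exact hT.isSymmetric.orthogonalFamily_eigenspaces (ofReal_injective.ne (hlam.ne hij))
    ⟨_, hv i⟩ ⟨_, hv j⟩

end Spectrum

theorem quasimodes_give_eigenvalue_upper_bounds_general
    {H : Type*} [NormedAddCommGroup H] [InnerProductSpace ℂ H] [CompleteSpace H]
    (T : H →L[ℂ] H) (hT : IsSelfAdjoint T)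
    (N : ℕ) (φ : Fin (N + 1) → H) (μ : Fin (N + 1) → ℝ) (ε : ℝ)
    (horth : ∀ i j : Fin (N + 1),
      (inner ℂ (φ i) (φ j) : ℂ) = if i = j then 1 else 0)
    (hquasi : ∀ j : Fin (N + 1), ‖T (φ j) - (μ j : ℂ) • φ j‖ ≤ ε)
    (hmono : Monotone μ)
    (hsep : ∀ j : Fin N, 2 * ε < μ j.succ - μ j.castSucc)
    (heigen : ∀ z ∈ spectrum ℂ T ∩ {z : ℂ | z.re ≤ μ (Fin.last N) + ε},
      Module.End.HasEigenvalue (T : H →ₗ[ℂ] H) z) :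
    ∀ j : Fin (N + 1),
      sInf {m : ℝ | ∃ V : Submodule ℂ H, Module.finrank ℂ V = (j : ℕ) + 1
            ∧ ∀ u ∈ V, (inner ℂ (T u) u : ℂ).re ≤ m * ‖u‖ ^ 2}
        ≤ μ j + ε := by
  have hnear : ∀ i, ∃ x : ℝ, |x - μ i| ≤ ε ∧ Module.End.HasEigenvalue (T : H →ₗ[ℂ] H) x := by
    intro i
    obtain ⟨x, hx, hxμ⟩ :=
      hT.exists_mem_spectrum_abs_sub_le ((orthonormal_iff_ite.mpr horth).1 i) (μ i)
    have hxε := hxμ.trans (hquasi i)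
    refine ⟨x, hxε, heigen x ⟨hx, ?_⟩⟩
    show (x : ℂ).re ≤ _
    rw [ofReal_re]
    linarith [(abs_le.mp hxε).2, hmono (Fin.le_last i)]
  choose lam hlam heig using hnear
  have hlam_mono : StrictMono lam := Fin.strictMono_iff_lt_succ.mpr fun i => by
    linarith [hsep i, (abs_le.mp (hlam i.castSucc)).2, (abs_le.mp (hlam i.succ)).1]
  obtain ⟨v, hv, hTv⟩ := hT.exists_orthonormal_eigenvectors hlam_mono.injective heig
  intro j
  show minmaxValue T j ≤ μ j + ε
  refine minmaxValue_le_of_orthonormal_eigenvectors (hv.comp _ (Fin.castLE_injective j.isLt))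
    (fun i => hTv _) fun i => ?_
  have hij : Fin.castLE j.isLt i ≤ j := Fin.le_def.mpr (Nat.le_of_lt_succ i.isLt)
  linarith [(abs_le.mp (hlam (Fin.castLE j.isLt i))).2, hmono hij]

/-- abstract quasimode upper bound for eigenvalues: let `T` be
a self-adjoint operator (bounded below) on a complex Hilbert space, and let
`φ₀, …, φ_N` be orthonormal vectors with `‖Tφⱼ − μⱼφⱼ‖ ≤ ε`, where
`μ₀ ≤ … ≤ μ_N` and consecutive `μⱼ` are separated by more than `2ε`. Assume
the spectrum of `T` in `(−∞, μ_N + ε]` consists of finitely many eigenvalues.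
Then the `j`-th min-max value `λⱼ` of `T` (which under the finiteness
assumption is its `j`-th eigenvalue counted with multiplicity) satisfies
`λⱼ ≤ μⱼ + ε` for all `0 ≤ j ≤ N`. -/
theorem quasimodes_give_eigenvalue_upper_bounds
    {H : Type*} [NormedAddCommGroup H] [InnerProductSpace ℂ H] [CompleteSpace H]
    (T : H →L[ℂ] H) (hT : IsSelfAdjoint T)
    (hbelow : ∃ c : ℝ, ∀ u : H, c * ‖u‖ ^ 2 ≤ (inner ℂ (T u) u : ℂ).re)
    (N : ℕ) (φ : Fin (N + 1) → H) (μ : Fin (N + 1) → ℝ) (ε : ℝ) (hε : 0 ≤ ε)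
    (horth : ∀ i j : Fin (N + 1),
      (inner ℂ (φ i) (φ j) : ℂ) = if i = j then 1 else 0)
    (hquasi : ∀ j : Fin (N + 1), ‖T (φ j) - (μ j : ℂ) • φ j‖ ≤ ε)
    (hmono : Monotone μ)
    (hsep : ∀ j : Fin N, 2 * ε < μ j.succ - μ j.castSucc)
    (hfin : (spectrum ℂ T ∩ {z : ℂ | z.re ≤ μ (Fin.last N) + ε}).Finite)
    (heigen : ∀ z ∈ spectrum ℂ T ∩ {z : ℂ | z.re ≤ μ (Fin.last N) + ε},
      Module.End.HasEigenvalue (T : H →ₗ[ℂ] H) z) :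
    ∀ j : Fin (N + 1),
      sInf {m : ℝ | ∃ V : Submodule ℂ H, Module.finrank ℂ V = (j : ℕ) + 1
            ∧ ∀ u ∈ V, (inner ℂ (T u) u : ℂ).re ≤ m * ‖u‖ ^ 2}
        ≤ μ j + ε :=
  quasimodes_give_eigenvalue_upper_bounds_general T hT N φ μ ε horth hquasi hmono hsep heigen
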